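/- If Y satisfies the SDE dY(t) = k(t,Y(t−))dt + g(t,Y(t−))dB_t + ∫_{|y|<c} h(t,Y(t−),y) Ñ(dt,dy) with Y(0)=x₀, and Y is stochastically stable, then X(t) := Y(E_t), which solves the time-changed SDE dX = k(E_t,X(t−))dE_t + g(E_t,X(t−))dB_{E_t} + ∫_{|y|<c} h(E_t,X(t−),y) Ñ(dE_t,dy), is stochastically stable. -/

import Mathlib

/-!
Stochastic stability only asks that `|Z(t, x₀)|` stay below `r` along the whole half-line
`t ≥ 0`. Since the time change `E` maps `[0, ∞)` into `[0, ∞)`, the path `t ↦ Y(E_t)` visits only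
values that the path of `Y` already visits, so each event `{sup_t |Y(t)| < r}` is contained in
`{sup_t |Y(E_t)| < r}` and the stability bounds for `Y` transfer verbatim to `X`.
-/

open MeasureTheory

/-- `Z x₀ t ω` is the paper's `Z(t, x₀)` at the sample point `ω`. -/
def StochasticallyStable {Ω : Type*} [MeasurableSpace Ω] (P : Measure Ω)
    (Z : ℝ → ℝ → Ω → ℝ) : Prop :=
  ∀ ε ∈ Set.Ioo (0 : ℝ) 1, ∀ r : ℝ, 0 < r → ∃ δ > 0, ∀ x₀ : ℝ, |x₀| < δ →
    ENNReal.ofReal (1 - ε) ≤ P {ω | ∀ t : ℝ, 0 ≤ t → |Z x₀ t ω| < r}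

namespace StochasticallyStable

variable {Ω : Type*} [MeasurableSpace Ω] {P : Measure Ω} {Y X : ℝ → ℝ → Ω → ℝ}

theorem of_ae_subset (hY : StochasticallyStable P Y)
    (hsub : ∀ x₀ r, {ω | ∀ t : ℝ, 0 ≤ t → |Y x₀ t ω| < r} ≤ᵐ[P]
      {ω | ∀ t : ℝ, 0 ≤ t → |X x₀ t ω| < r}) :
    StochasticallyStable P X := by
  intro ε hε r hr
  obtain ⟨δ, hδ, hδY⟩ := hY ε hε r hr
  exact ⟨δ, hδ, fun x₀ hx₀ => (hδY x₀ hx₀).trans (measure_mono_ae (hsub x₀ r))⟩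

theorem comp_time_change (hY : StochasticallyStable P Y) {E : ℝ → Ω → ℝ}
    (hE : ∀ᵐ ω ∂P, Set.MapsTo (fun t => E t ω) (Set.Ici 0) (Set.Ici 0)) :
    StochasticallyStable P fun x₀ t ω => Y x₀ (E t ω) ω := by
  refine hY.of_ae_subset fun x₀ r => ?_
  filter_upwards [hE] with ω hEω hYω t ht
  exact hYω (E t ω) (hEω ht)

end StochasticallyStable

theorem time_changed_sde_stability_transfer_general
    {Ω : Type*} [MeasurableSpace Ω] (P : Measure Ω)
    (E : ℝ → Ω → ℝ) (Y X : ℝ → ℝ → Ω → ℝ)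
    (hEnn : ∀ t ω, 0 ≤ E t ω)
    (hX : ∀ x₀ t ω, X x₀ t ω = Y x₀ (E t ω) ω)
    (hY : StochasticallyStable P Y) :
    StochasticallyStable P X := by
  obtain rfl : X = fun x₀ t ω => Y x₀ (E t ω) ω := funext₃ hX
  exact hY.comp_time_change (.of_forall fun ω _ _ => hEnn _ ω)

/-- If `Y` solves the SDE `dY = k dt + g dB + ∫_{|y|<c} h dÑ` and is stochastically
stable, then the time-changed process `X (t, x₀) := Y (E_t, x₀)` — which, by Kobayashi's
duality, solves the corresponding time-changed SDE driven by `dE_t`, `dB_{E_t}` and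
`Ñ(dE_t, dy)` — is stochastically stable.  The time change enters only through the fact
that the image of `[0,∞)` under `t ↦ E_t` is almost surely `[0,∞)`. -/
theorem time_changed_sde_stability_transfer
    {Ω : Type*} [MeasurableSpace Ω] (P : Measure Ω) [IsProbabilityMeasure P]
    (E : ℝ → Ω → ℝ) (Y X : ℝ → ℝ → Ω → ℝ)
    (hEnn : ∀ t ω, 0 ≤ E t ω)
    (hEmono : ∀ ω, Monotone fun t => E t ω)
    (hE0 : ∀ ω, E 0 ω = 0)
    (himg : ∀ᵐ ω ∂P, (fun t => E t ω) '' Set.Ici 0 = Set.Ici 0)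
    (hX : ∀ x₀ t ω, X x₀ t ω = Y x₀ (E t ω) ω)
    (hY : StochasticallyStable P Y) :
    StochasticallyStable P X :=
  time_changed_sde_stability_transfer_general P E Y X hEnn hX hY
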